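/- Let A be an s-hierarchical ordered group. Then the collection of convex subgroups of A that are initial subtrees of ⟨A, <_s⟩ is linearly ordered—indeed well-ordered—by inclusion. -/

import Mathlib

universe u

section Tree

variable {α : Type u}

/-- The set of strict tree-predecessors of `x` under the relation `s`. -/
def treePred (s : α → α → Prop) (x : α) : Set α := {y | s y x}

/-- `⟨α, s⟩` is a tree: `s` is a strict partial order each of whose predecessor
sets is well-ordered by `s`. -/
structure IsTreeOrd (s : α → α → Prop) : Prop where
  irrefl : ∀ x, ¬ s x x
  trans : ∀ {x y z}, s x y → s y z → s x z
  predWO : ∀ x : α, IsWellOrder (treePred s x) fun a b => s a.1 b.1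

/-- The tree-rank of `x`: the order type of its set of predecessors. -/
noncomputable def treeRank (s : α → α → Prop) (h : IsTreeOrd s) (x : α) : Ordinal :=
  @Ordinal.type (treePred s x) (fun a b => s a.1 b.1) (h.predWO x)

/-- `y` is an immediate successor of `x`. -/
def IsImmSucc (s : α → α → Prop) (h : IsTreeOrd s) (x y : α) : Prop :=
  s x y ∧ treeRank s h y = treeRank s h x + 1

/-- `C` is a chain (a subclass totally ordered by `s`). -/
def IsTreeChain (s : α → α → Prop) (C : Set α) : Prop :=
  ∀ x ∈ C, ∀ y ∈ C, x ≠ y → s x y ∨ s y x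

/-- `C` is a chain of limit length. -/
def IsLimitChain (s : α → α → Prop) (C : Set α) : Prop :=
  IsTreeChain s C ∧ ∃ hwo : IsWellOrder C fun a b => s a.1 b.1,
    (@Ordinal.type C (fun a b => s a.1 b.1) hwo) |> Order.IsSuccLimit

/-- `y` is an immediate successor of the chain `C`. -/
def IsChainImmSucc (s : α → α → Prop) (h : IsTreeOrd s) (C : Set α) (y : α) : Prop :=
  (∀ x ∈ C, s x y) ∧
    IsLeast {o : Ordinal | ∀ x ∈ C, treeRank s h x < o} (treeRank s h y)

/-- `⟨α, s⟩` is a binary tree. -/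
structure IsBinaryTree (s : α → α → Prop) : Prop where
  toIsTreeOrd : IsTreeOrd s
  succ_binary : ∀ x a b c : α, IsImmSucc s toIsTreeOrd x a → IsImmSucc s toIsTreeOrd x b →
    IsImmSucc s toIsTreeOrd x c → a = b ∨ a = c ∨ b = c
  chain_succ_unique : ∀ C : Set α, IsLimitChain s C → ∀ y z : α,
    IsChainImmSucc s toIsTreeOrd C y → IsChainImmSucc s toIsTreeOrd C z → y = z

variable [LinearOrder α]

/-- `L_s(x)`: the predecessors of `x` lying below `x`. -/
def Lopts (s : α → α → Prop) (x : α) : Set α := {a | s a x ∧ a < x}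

/-- `R_s(x)`: the predecessors of `x` lying above `x`. -/
def Ropts (s : α → α → Prop) (x : α) : Set α := {a | s a x ∧ x < a}

/-- `⟨α, <, s⟩` is a lexicographically ordered binary tree. -/
structure IsLexBinTree (s : α → α → Prop) : Prop where
  toIsBinaryTree : IsBinaryTree s
  lex : ∀ x y : α, x ≠ y →
    ((¬ s x y ∧ ¬ s y x) ↔ ∃ z, s z x ∧ s z y ∧ (x < z ∧ z < y ∨ y < z ∧ z < x))

/-- `x = {L | R}`: `x` is the simplest element lying between `L` and `R`. -/
def IsSimplest (s : α → α → Prop) (L R : Set α) (x : α) : Prop :=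
  (∀ l ∈ L, l < x) ∧ (∀ r ∈ R, x < r) ∧
    ∀ y, y ≠ x → (∀ l ∈ L, l < y) → (∀ r ∈ R, y < r) → s x y

/-- `B` is an initial subtree: it is closed under `s`-predecessors. -/
def IsInitialSubtree (s : α → α → Prop) (B : Set α) : Prop :=
  ∀ x ∈ B, ∀ y, s y x → y ∈ B

end Tree

/-- s-hierarchical ordered group. -/
structure IsSHGroup (α : Type u) [AddCommGroup α] [LinearOrder α] [IsOrderedAddMonoid α] (s : α → α → Prop) : Prop where
  lexBin : IsLexBinTree s
  add_eq : ∀ x y : α, IsSimplest s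
    ({z | ∃ x' ∈ Lopts s x, z = x' + y} ∪ {z | ∃ y' ∈ Lopts s y, z = x + y'})
    ({z | ∃ x'' ∈ Ropts s x, z = x'' + y} ∪ {z | ∃ y'' ∈ Ropts s y, z = x + y''})
    (x + y)

/-- s-hierarchical ordered domain. -/
structure IsSHDomain (α : Type u) [CommRing α] [LinearOrder α] [IsStrictOrderedRing α] (s : α → α → Prop) : Prop where
  toIsSHGroup : IsSHGroup α s
  mul_eq : ∀ x y : α, IsSimplest s
    ({z | ∃ x' ∈ Lopts s x, ∃ y' ∈ Lopts s y, z = x' * y + x * y' - x' * y'} ∪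
     {z | ∃ x'' ∈ Ropts s x, ∃ y'' ∈ Ropts s y, z = x'' * y + x * y'' - x'' * y''})
    ({z | ∃ x' ∈ Lopts s x, ∃ y'' ∈ Ropts s y, z = x' * y + x * y'' - x' * y''} ∪
     {z | ∃ x'' ∈ Ropts s x, ∃ y' ∈ Lopts s y, z = x'' * y + x * y' - x'' * y'})
    (x * y)

/-- s-hierarchical ordered field. -/
def IsSHField (α : Type u) [Field α] [LinearOrder α] [IsStrictOrderedRing α] (s : α → α → Prop) : Prop :=
  IsSHDomain α s

section Hahn

variable {Γ : Type*} [LinearOrder Γ]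

/-- The series `r·t^y` in `ℝ((t^Γ))` (represented with exponents in `Γᵒᵈ`, so that
supports are well-ordered under the reverse order `>` of `Γ`). -/
noncomputable def tpow (y : Γ) (r : ℝ) : HahnSeries Γᵒᵈ ℝ :=
  HahnSeries.single (OrderDual.toDual y) r

/-- Truncation of a Hahn series at `γ`: keep exactly the coefficients at exponents `> γ`. -/
noncomputable def htrunc (x : HahnSeries Γᵒᵈ ℝ) (γ : Γ) : HahnSeries Γᵒᵈ ℝ where
  coeff g := if γ < OrderDual.ofDual g then x.coeff g else 0
  isPWO_support' := x.isPWO_support.mono (by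
    intro g hg
    simp only [Function.mem_support] at hg ⊢
    intro h
    simp [h] at hg)

/-- The leading coefficient of a Hahn series: its coefficient at the greatest
element of its support (`0` for the zero series). -/
noncomputable def leadCoeff (x : HahnSeries Γᵒᵈ ℝ) : ℝ :=
  letI := Classical.dec (x = 0)
  if h : x = 0 then 0
  else x.coeff (x.isWF_support.min (HahnSeries.support_nonempty_iff.2 h))

/-- A Hahn series is positive iff its leading coefficient is positive. -/
def HahnPos (x : HahnSeries Γᵒᵈ ℝ) : Prop := x ≠ 0 ∧ 0 < leadCoeff x

/-- The order type of the support of a Hahn series, well-ordered by the reverse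
order of `Γ`. -/
noncomputable def suppOrderType (x : HahnSeries Γᵒᵈ ℝ) : Ordinal :=
  @Ordinal.type x.support (fun a b => (a : Γᵒᵈ) < (b : Γᵒᵈ))
    { trichotomous := fun a b hab hba =>
        Subtype.ext (le_antisymm (not_lt.1 hba) (not_lt.1 hab))
      wf := x.isWF_support }

end Hahn

/-- The set of dyadic rational real numbers. -/
def Dyadics : Set ℝ := {x | ∃ (z : ℤ) (m : ℕ), x = z / 2 ^ m}

/-- `H` is an initial subgroup of `ℝ`: it is `{0}`, or `{z/2^m : z ∈ ℤ}` for some `m`,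
or it contains all dyadic rationals. -/
def IsInitialRealSubgroup (H : Set ℝ) : Prop :=
  H = {0} ∨ (∃ m : ℕ, H = {x : ℝ | ∃ z : ℤ, x = (z : ℝ) / 2 ^ m}) ∨ Dyadics ⊆ H
/-- `K` is (the carrier of) a subgroup. -/
def IsSubgroupSet {A : Type u} [AddGroup A] (K : Set A) : Prop :=
  0 ∈ K ∧ (∀ x ∈ K, ∀ y ∈ K, x + y ∈ K) ∧ ∀ x ∈ K, -x ∈ K

/-- `K` is an order-convex subset. -/
def IsConvexSet {A : Type u} [Preorder A] (K : Set A) : Prop :=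
  ∀ x ∈ K, ∀ y ∈ K, ∀ z, x ≤ z → z ≤ y → z ∈ K
section Aux

variable {A : Type u}

/-- In a tree, the relation `s` is well-founded. -/
lemma tree_wf (s : A → A → Prop) (h : IsTreeOrd s) : WellFounded s := by
  constructor
  intro x
  have key : ∀ a : treePred s x, Acc s a.1 := by
    refine fun a => (h.predWO x).wf.induction (C := fun a => Acc s a.1) a ?_
    intro b IH
    exact Acc.intro b.1 fun y hy => IH ⟨y, h.trans hy b.2⟩ hy
  exact Acc.intro x fun y hy => key ⟨y, hy⟩

variable [AddCommGroup A] [LinearOrder A] [IsOrderedAddMonoid A]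

lemma lt_of_pos_notmem {K : Set A} (hg : IsSubgroupSet K) (hc : IsConvexSet K)
    {x : A} (hx : x ∉ K) (hpos : 0 < x) : ∀ k ∈ K, k < x := by
  intro k hk
  by_contra hle
  push_neg at hle
  exact hx (hc 0 hg.1 k hk x hpos.le hle)

lemma gt_of_neg_notmem {K : Set A} (hg : IsSubgroupSet K) (hc : IsConvexSet K)
    {x : A} (hx : x ∉ K) (hneg : x < 0) : ∀ k ∈ K, x < k := by
  intro k hk
  by_contra hle
  push_neg at hle
  exact hx (hc k hk 0 hg.1 x hle hneg.le)

/-- Linearity of convex subgroups under inclusion. -/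
lemma convex_subgroups_linear {K₁ K₂ : Set A}
    (hg₁ : IsSubgroupSet K₁) (hc₁ : IsConvexSet K₁)
    (hg₂ : IsSubgroupSet K₂) (hc₂ : IsConvexSet K₂) :
    K₁ ⊆ K₂ ∨ K₂ ⊆ K₁ := by
  by_cases hsub : K₁ ⊆ K₂
  · exact Or.inl hsub
  · right
    rw [Set.not_subset] at hsub
    obtain ⟨x, hx₁, hx₂⟩ := hsub
    intro y hy
    have habsy : |y| ∈ K₂ := by
      rcases abs_choice y with hab | hab
      · rwa [hab]
      · rw [hab]; exact hg₂.2.2 y hy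
    have habsx : |x| ∈ K₁ := by
      rcases abs_choice x with hab | hab
      · rwa [hab]
      · rw [hab]; exact hg₁.2.2 x hx₁
    have hlt : |y| ≤ |x| := by
      by_contra hle
      push_neg at hle
      have := abs_le.mp hle.le
      exact hx₂ (hc₂ (-|y|) (hg₂.2.2 _ habsy) (|y|) habsy x this.1 this.2)
    have := abs_le.mp hlt
    have hy1 := abs_le.mp (le_refl |y|)
    exact hc₁ (-|x|) (hg₁.2.2 _ habsx) (|x|) habsx y (le_trans (neg_le_neg hlt) hy1.1)
      (le_trans hy1.2 hlt)

end Aux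

/-- The convex subgroups of an s-hierarchical ordered group that are initial subtrees
are linearly ordered—indeed well-ordered—by inclusion. -/
theorem stmt5 {A : Type u} [AddCommGroup A] [LinearOrder A] [IsOrderedAddMonoid A] (s : A → A → Prop)
    (h : IsSHGroup A s) :
    (∀ K₁ K₂ : Set A,
      IsSubgroupSet K₁ ∧ IsConvexSet K₁ ∧ IsInitialSubtree s K₁ →
      IsSubgroupSet K₂ ∧ IsConvexSet K₂ ∧ IsInitialSubtree s K₂ →
      K₁ ⊆ K₂ ∨ K₂ ⊆ K₁) ∧
    ∀ T : Set (Set A),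
      (∀ K ∈ T, IsSubgroupSet K ∧ IsConvexSet K ∧ IsInitialSubtree s K) →
      T.Nonempty → ∃ K ∈ T, ∀ K' ∈ T, K ⊆ K' := by
  have hTO := h.lexBin.toIsBinaryTree.toIsTreeOrd
  have hwf : WellFounded s := tree_wf s hTO
  constructor
  · rintro K₁ K₂ ⟨hg₁, hc₁, -⟩ ⟨hg₂, hc₂, -⟩
    exact convex_subgroups_linear hg₁ hc₁ hg₂ hc₂
  · intro T hT ⟨K₀, hK₀⟩
    set U : Set A := {x | ∃ K ∈ T, x ∉ K} with hUdef
    by_cases hU : U.Nonempty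
    · set y := hwf.min U hU with hydef
      have hyU : y ∈ U := hwf.min_mem U hU
      obtain ⟨K₂, hK₂T, hyK₂⟩ := hyU
      obtain ⟨hg₂, hc₂, hi₂⟩ := hT K₂ hK₂T
      have hpred : ∀ z, s z y → ∀ K ∈ T, z ∈ K := by
        intro z hz K hK
        by_contra hc
        exact hwf.not_lt_min U ⟨K, hK, hc⟩ hz
      refine ⟨K₂, hK₂T, ?_⟩
      intro K₁ hK₁T
      obtain ⟨hg₁, hc₁, hi₁⟩ := hT K₁ hK₁T
      by_contra hns
      rw [Set.not_subset] at hns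
      obtain ⟨x₀, hx₀K₂, hx₀K₁⟩ := hns
      have hy0 : y ≠ 0 := fun hy0 => hyK₂ (hy0 ▸ hg₂.1)
      have hx₀0 : x₀ ≠ 0 := fun h0 => hx₀K₁ (h0 ▸ hg₁.1)
      -- the main contradiction, for a suitably signed x
      have main : ∀ x : A, x ∈ K₂ → x ∉ K₁ → ((0 < y ∧ 0 < x) ∨ (y < 0 ∧ x < 0)) → False := by
        rintro x hxK₂ hxK₁ hsign
        have hne : x ≠ y := fun hxy => hyK₂ (hxy ▸ hxK₂)
        have hnxy : ¬ s x y := fun hs => hxK₁ (hpred x hs K₁ hK₁T)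
        have hnyx : ¬ s y x := fun hs => hyK₂ (hi₂ x hxK₂ y hs)
        obtain ⟨z, hzx, hzy, hdisj⟩ := (h.lexBin.lex x y hne).mp ⟨hnxy, hnyx⟩
        have hzK₁ : z ∈ K₁ := hpred z hzy K₁ hK₁T
        rcases hsign with ⟨hy, hx⟩ | ⟨hy, hx⟩
        · have hzx' : z < x := lt_of_pos_notmem hg₁ hc₁ hxK₁ hx z hzK₁
          have hxy : x < y := lt_of_pos_notmem hg₂ hc₂ hyK₂ hy x hxK₂
          rcases hdisj with ⟨h1, h2⟩ | ⟨h1, h2⟩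
          · exact absurd h1 (not_lt.mpr hzx'.le)
          · exact absurd (h2.trans hxy) (not_lt.mpr h1.le)
        · have hzx' : x < z := gt_of_neg_notmem hg₁ hc₁ hxK₁ hx z hzK₁
          have hxy : y < x := gt_of_neg_notmem hg₂ hc₂ hyK₂ hy x hxK₂
          rcases hdisj with ⟨h1, h2⟩ | ⟨h1, h2⟩
          · exact absurd (h2.trans hxy) (not_lt.mpr h1.le)
          · exact absurd h2 (not_lt.mpr hzx'.le)
      rcases lt_or_gt_of_ne hy0 with hy | hy
      · -- need x < 0 in K₂ \ K₁
        rcases lt_or_gt_of_ne hx₀0 with hx | hx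
        · exact main x₀ hx₀K₂ hx₀K₁ (Or.inr ⟨hy, hx⟩)
        · refine main (-x₀) (hg₂.2.2 _ hx₀K₂) (fun hc => hx₀K₁ ?_) (Or.inr ⟨hy, neg_neg_iff_pos.mpr hx⟩)
          have := hg₁.2.2 _ hc
          rwa [neg_neg] at this
      · rcases lt_or_gt_of_ne hx₀0 with hx | hx
        · refine main (-x₀) (hg₂.2.2 _ hx₀K₂) (fun hc => hx₀K₁ ?_) (Or.inl ⟨hy, neg_pos.mpr hx⟩)
          have := hg₁.2.2 _ hc
          rwa [neg_neg] at this
        · exact main x₀ hx₀K₂ hx₀K₁ (Or.inl ⟨hy, hx⟩)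
    · refine ⟨K₀, hK₀, fun K' hK' x hx => ?_⟩
      by_contra hc
      exact hU ⟨x, K', hK', hc⟩
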